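/- Let Ω ⊂ ℝⁿ be a bounded open set of class C^{1,1}, let R > 0, let Ω₁ ∈ U_R(Ω) with Γ := ∂Ω₁ and Ω₂ := Ω\closure(Ω₁). There exist positive constants c and β₀, depending only on R, such that for every β ≥ β₀ there are functions z_{1,β} : Ω₁ → ℝ and z_{2,β} : Ω₂ → ℝ of class W^{2,∞} with: (i) 1/2 ≤ z_{i,β} ≤ 1 in Ω_i for i = 1,2, and z_{2,β} ≡ 1/2 in a neighbourhood of ∂Ω; (ii) Δz_{i,β} ≤ c β z_{i,β} in Ω_i for i = 1,2; (iii) z_{1,β}(x) = z_{2,β}(x) = 1 and ∂_ν z_{1,β}(x) = −∂_ν z_{2,β}(x) ≥ √β for every x ∈ Γ; (iv) ‖∇z_{i,β}‖_∞ ≤ c√β and ‖∇²z_{i,β}‖_∞ ≤ cβ. -/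

import Mathlib

open MeasureTheory Metric Set Filter Topology RealInnerProductSpace
open scoped ENNReal NNReal

noncomputable section

/-- Euclidean `n`-space. -/
abbrev En (n : ℕ) : Type := EuclideanSpace ℝ (Fin n)

variable {n : ℕ}

/-- The signed distance function of a set `E`,
`d_E(x) = dist(x, E) - dist(x, Eᶜ)`. -/
def sgnDist (E : Set (En n)) (x : En n) : ℝ :=
  Metric.infDist x E - Metric.infDist x Eᶜ

/-- The class `U_R`: open sets satisfying the uniform two-sided tangent ball condition
of radius `R`. -/
def UR (R : ℝ) (E : Set (En n)) : Prop :=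
  IsOpen E ∧ ∀ p ∈ frontier E, ∃ p' p'' : En n,
    dist p p' = R ∧ dist p p'' = R ∧ ball p' R ⊆ E ∧ ball p'' R ⊆ Eᶜ

/-- The class `U_R(Ω)`: members of `U_R` contained in `Ω` at distance at least `R`
from `∂Ω`. -/
def URin (R : ℝ) (Ω E : Set (En n)) : Prop :=
  UR R E ∧ E ⊆ Ω ∧ ∀ x ∈ E, ∀ y ∈ frontier Ω, R ≤ dist x y

/-- Open sets of class `C^{1,1}` (uniform two-sided tangent ball condition). -/
def IsC11Set (E : Set (En n)) : Prop := IsOpen E ∧ ∃ R > 0, UR R E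

/-- Open sets with boundary of class `C^{2,α}`, expressed through the regularity of the
signed distance function near the boundary. -/
def IsC2AlphaSet (α : ℝ) (E : Set (En n)) : Prop :=
  IsOpen E ∧ ∃ δ > 0, ContDiffOn ℝ 2 (sgnDist E) (thickening δ (frontier E)) ∧
    ∃ Λ : ℝ, ∀ x ∈ thickening δ (frontier E), ∀ y ∈ thickening δ (frontier E),
      ‖fderiv ℝ (fderiv ℝ (sgnDist E)) x - fderiv ℝ (fderiv ℝ (sgnDist E)) y‖ ≤
        Λ * dist x y ^ α

/-- `Λ^α(∂E) ≤ Λ`: the `α`-Hölder seminorm of the (tangential) gradient of the unit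
normal field `ν = ∇ d_E` along `∂E` is at most `Λ`. -/
def HolderNormalBound (α : ℝ) (E : Set (En n)) (Λ : ℝ) : Prop :=
  ∀ x ∈ frontier E, ∀ y ∈ frontier E,
    ‖fderiv ℝ (gradient (sgnDist E)) x - fderiv ℝ (gradient (sgnDist E)) y‖ ≤
      Λ * dist x y ^ α

/-- The Laplacian of a real-valued function on Euclidean space. -/
def lapl (u : En n → ℝ) (x : En n) : ℝ :=
  ∑ i : Fin n, fderiv ℝ (fun y => fderiv ℝ u y (EuclideanSpace.single i 1)) x
    (EuclideanSpace.single i 1)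

/-- The divergence of a vector field on Euclidean space. -/
def diverg (V : En n → En n) (x : En n) : ℝ :=
  ∑ i : Fin n, ⟪fderiv ℝ V x (EuclideanSpace.single i 1), EuclideanSpace.single i 1⟫

/-- `ν` is the outer unit normal to `E` at `x`, in the sense of interior and exterior
tangent balls. -/
def IsOuterNormal (E : Set (En n)) (x ν : En n) : Prop :=
  ‖ν‖ = 1 ∧ ∃ r > 0, ball (x - r • ν) r ⊆ E ∧ ball (x + r • ν) r ⊆ Eᶜ

/-- Homogeneous Neumann boundary condition `∂_ν u = 0` on `∂U`, in the sense of
boundary traces of the normal derivative. -/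
def NeumannZero (u : En n → ℝ) (U : Set (En n)) : Prop :=
  ∀ x ∈ frontier U, ∀ ν : En n, IsOuterNormal U x ν →
    Tendsto (fun y => fderiv ℝ u y ν) (𝓝[U] x) (𝓝 0)

/-- Conormal homogeneous Neumann boundary condition `A ∇u · ν = 0` on `∂U`. -/
def CoNeumannZero (A : En n → (En n →L[ℝ] En n)) (u : En n → ℝ) (U : Set (En n)) : Prop :=
  ∀ x ∈ frontier U, ∀ ν : En n, IsOuterNormal U x ν →
    Tendsto (fun y => ⟪A y (gradient u y), ν⟫) (𝓝[U] x) (𝓝 0)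

/-- `u` is a (classical) solution of the Neumann problem `Δu = β (u - g)` in `U`,
`∂_ν u = 0` on `∂U`. -/
def IsNeumannSolution (U : Set (En n)) (β : ℝ) (g u : En n → ℝ) : Prop :=
  (∀ x ∈ U, ContDiffAt ℝ 2 u x) ∧ (∀ x ∈ U, lapl u x = β * (u x - g x)) ∧ NeumannZero u U

/-- `g ∈ W^{1,∞}(U)` with norm at most `M`: `g` is bounded by `M` and `M`-Lipschitz on
each connected component of `U`. -/
def MemW1inf (U : Set (En n)) (g : En n → ℝ) (M : ℝ) : Prop :=
  (∀ x ∈ U, |g x| ≤ M) ∧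
  ∀ x ∈ U, LipschitzOnWith (Real.toNNReal M) g (connectedComponentIn U x)

/-- `g ∈ W^{2,∞}(U)` with norm at most `M`. -/
def MemW2inf (U : Set (En n)) (g : En n → ℝ) (M : ℝ) : Prop :=
  (∀ x ∈ U, |g x| ≤ M) ∧ (∀ x ∈ U, DifferentiableAt ℝ g x) ∧
  (∀ x ∈ U, ‖fderiv ℝ g x‖ ≤ M) ∧
  ∀ x ∈ U, LipschitzOnWith (Real.toNNReal M) (fun y => fderiv ℝ g y)
    (connectedComponentIn U x)

/-- The `C^{0,γ}(s)` norm of `f` is at most `M`. -/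
def HolderBound (γ : ℝ) (s : Set (En n)) (f : En n → ℝ) (M : ℝ) : Prop :=
  (∀ x ∈ s, |f x| ≤ M) ∧ ∀ x ∈ s, ∀ y ∈ s, |f x - f y| ≤ M * dist x y ^ γ

/-- Nontangential one-sided trace `a` of `g` at `x` from the side of the unit vector
`ν`: the limit of `g` along the open cone around `ν` with vertex `x`. -/
def ConeTrace (g : En n → ℝ) (x ν : En n) (a : ℝ) : Prop :=
  Tendsto g (𝓝[{y | ‖y - x‖ < 2 * ⟪ν, y - x⟫}] x) (𝓝 a)

/-- `g` has a jump of size larger than `S` at `x` (upper trace minus lower trace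
exceeds `S`). -/
def JumpGT (g : En n → ℝ) (x : En n) (S : ℝ) : Prop :=
  ∃ ν : En n, ‖ν‖ = 1 ∧ ∃ a b : ℝ, ConeTrace g x ν a ∧ ConeTrace g x (-ν) b ∧ S < |a - b|

/-- `g` has a nontrivial jump at `x` (i.e. `x ∈ S_g`). -/
def JumpNE (g : En n → ℝ) (x : En n) : Prop :=
  ∃ ν : En n, ‖ν‖ = 1 ∧ ∃ a b : ℝ, ConeTrace g x ν a ∧ ConeTrace g x (-ν) b ∧ a ≠ b

/-- The (non-homogeneous) Mumford–Shah energy of the pair `(u, K)`: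
`∫_{Ω \ K} |∇u|² dx + H^{n-1}(K) + β ∫_{Ω \ K} (u - g)² dx`. -/
def MSEnergy (Ω : Set (En n)) (β : ℝ) (g u : En n → ℝ) (K : Set (En n)) : ℝ≥0∞ :=
  ENNReal.ofReal (∫ x in Ω \ K, ‖fderiv ℝ u x‖ ^ 2) + μH[((n : ℝ) - 1)] K +
  ENNReal.ofReal (β * ∫ x in Ω \ K, (u x - g x) ^ 2)

/-- Admissible pairs `(u, K)` for the (strong formulation of the) Mumford–Shah
functional on `Ω`: `K` is a closed set of singularities contained in `closure Ω` and
`u` is differentiable on `Ω \ K`. -/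
def MSAdm (Ω : Set (En n)) (u : En n → ℝ) (K : Set (En n)) : Prop :=
  K ⊆ closure Ω ∧ IsClosed K ∧ ∀ x ∈ Ω \ K, DifferentiableAt ℝ u x

/-- `u`, with singular set `K`, is the unique absolute minimizer of `F_{β,g}` over
(strong) Mumford–Shah competitors on `Ω`. -/
def UniqueMinimizer (Ω : Set (En n)) (β : ℝ) (g u : En n → ℝ) (K : Set (En n)) : Prop :=
  MSAdm Ω u K ∧ ∀ v L, MSAdm Ω v L →
    MSEnergy Ω β g u K ≤ MSEnergy Ω β g v L ∧
    (MSEnergy Ω β g v L ≤ MSEnergy Ω β g u K → ∀ᵐ x ∂(volume.restrict Ω), v x = u x)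

/-- A simple arc of class `C³` up to the endpoints, parametrized on `[0,1]`. -/
def IsC3Arc (γ : ℝ → En n) : Prop :=
  ContDiffOn ℝ 3 γ (Icc 0 1) ∧ InjOn γ (Ico 0 1) ∧
  ∀ t ∈ Icc (0:ℝ) 1, derivWithin γ (Icc 0 1) t ≠ 0

/-- The set of vertices (endpoints of the boundary arcs) of a curvilinear polygon. -/
def polyVertices {k : ℕ} (arcs : Fin k → ℝ → En n) : Set (En n) :=
  ⋃ j, {arcs j 0, arcs j 1}

/-- A curvilinear polygon: a bounded connected open set whose boundary is a finite
union of simple `C³` arcs, meeting only at their endpoints, at corners with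
(interior) angles in `(0, π)`. -/
def CurvPolygon (Ω : Set (En n)) (k : ℕ) (arcs : Fin k → ℝ → En n) : Prop :=
  IsOpen Ω ∧ Bornology.IsBounded Ω ∧ Ω.Nonempty ∧ IsConnected Ω ∧
  (∀ j, IsC3Arc (arcs j)) ∧
  (frontier Ω = ⋃ j, arcs j '' Icc 0 1) ∧
  (∀ i j, i ≠ j → (arcs i '' Ioo 0 1) ∩ (arcs j '' Icc 0 1) = ∅) ∧
  (∀ j, ∀ t ∈ ({0, 1} : Set ℝ), ∃ w : En n, w ≠ 0 ∧ ∃ ε > 0,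
      ∀ x ∈ Ω ∩ ball (arcs j t) ε, 0 < ⟪w, x - arcs j t⟫) ∧
  (∀ i j, i ≠ j → ∀ s ∈ ({0, 1} : Set ℝ), ∀ t ∈ ({0, 1} : Set ℝ), arcs i s = arcs j t →
      LinearIndependent ℝ
        ![derivWithin (arcs i) (Icc 0 1) s, derivWithin (arcs j) (Icc 0 1) t])

/-- A simple closed curve of class `C^{2,α}` (parametrized periodically). -/
def IsClosedC2AlphaCurve (α : ℝ) (γ : ℝ → En n) : Prop :=
  (∀ t, γ (t + 1) = γ t) ∧ ContDiff ℝ 2 γ ∧ InjOn γ (Ico 0 1) ∧ (∀ t, deriv γ t ≠ 0) ∧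
  ∃ Λ : ℝ, ∀ s t : ℝ, ‖deriv (deriv γ) s - deriv (deriv γ) t‖ ≤ Λ * |s - t| ^ α

/-- A simple arc of class `C^{2,α}`, of class `C³` near its endpoints, contained in the
curvilinear polygon `Ω` except for its endpoints, which lie on `∂Ω` away from the
vertices and at which the arc meets `∂Ω` orthogonally. -/
def IsTransversalArc (Ω : Set (En n)) {k : ℕ} (arcs : Fin k → ℝ → En n) (α : ℝ)
    (γ : ℝ → En n) : Prop :=
  ContDiffOn ℝ 2 γ (Icc 0 1) ∧ InjOn γ (Icc 0 1) ∧
  (∀ t ∈ Icc (0:ℝ) 1, derivWithin γ (Icc 0 1) t ≠ 0) ∧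
  (∃ η > 0, ContDiffOn ℝ 3 γ (Icc 0 η) ∧ ContDiffOn ℝ 3 γ (Icc (1 - η) 1)) ∧
  γ '' Ioo 0 1 ⊆ Ω ∧
  γ 0 ∈ frontier Ω \ polyVertices arcs ∧ γ 1 ∈ frontier Ω \ polyVertices arcs ∧
  (∀ j, ∀ s ∈ Icc (0:ℝ) 1, ∀ t ∈ ({0, 1} : Set ℝ), arcs j s = γ t →
      ⟪derivWithin γ (Icc 0 1) t, derivWithin (arcs j) (Icc 0 1) s⟫ = 0) ∧
  ∃ Λ : ℝ, ∀ s ∈ Icc (0:ℝ) 1, ∀ t ∈ Icc (0:ℝ) 1,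
    ‖derivWithin (derivWithin γ (Icc 0 1)) (Icc 0 1) s -
      derivWithin (derivWithin γ (Icc 0 1)) (Icc 0 1) t‖ ≤ Λ * |s - t| ^ α

/-- Setting of Theorem `cor1`: `Ω ⊆ ℝⁿ` bounded of class `C^{1,1}` and `Γ` the union of
the boundaries of finitely many disjoint `C^{2,α}` sets in `U_R(Ω)` at mutual distance
at least `R`. -/
def SettingA (Ω Γ : Set (En n)) : Prop :=
  IsC11Set Ω ∧ Bornology.IsBounded Ω ∧
  ∃ α ∈ Ioo (0:ℝ) 1, ∃ R > 0, ∃ k : ℕ, ∃ O : Fin k → Set (En n),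
    (∀ i, IsC2AlphaSet α (O i)) ∧ (∀ i, URin R Ω (O i)) ∧
    (∀ i j, i ≠ j → ∀ x ∈ O i, ∀ y ∈ O j, R ≤ dist x y) ∧
    Γ = ⋃ i, frontier (O i)

/-- Setting of Theorem `cor2`: `Ω ⊆ ℝ²` a curvilinear polygon and `Γ` a finite disjoint
union of `C^{2,α}` curves, each either closed and contained in `Ω`, or meeting `∂Ω`
orthogonally at two regular points. -/
def SettingB (Ω Γ : Set (En n)) : Prop :=
  n = 2 ∧ ∃ k : ℕ, ∃ arcs : Fin k → ℝ → En n, CurvPolygon Ω k arcs ∧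
    ∃ α ∈ Ioo (0:ℝ) 1, ∃ m : ℕ, ∃ γ : Fin m → ℝ → En n,
      (∀ j, (IsClosedC2AlphaCurve α (γ j) ∧ range (γ j) ⊆ Ω) ∨
        IsTransversalArc Ω arcs α (γ j)) ∧
      (∀ i j : Fin m, i ≠ j → Disjoint (γ i '' Icc 0 1) (γ j '' Icc 0 1)) ∧
      Γ = ⋃ j, γ j '' Icc 0 1

/-- The affine interpolation of a discrete evolution `U : ℕ → (En n → ℝ)` with time
step `δ`. -/
def affInterp (δ : ℝ) (U : ℕ → En n → ℝ) (t : ℝ) (x : En n) : ℝ :=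
  (1 - (t / δ - (⌊t / δ⌋₊ : ℝ))) * U ⌊t / δ⌋₊ x +
    (t / δ - (⌊t / δ⌋₊ : ℝ)) * U (⌊t / δ⌋₊ + 1) x

/-- `v` is a minimizing movement for the homogeneous Mumford–Shah functional with
initial datum `u₀`: for a suitable sequence `δ k ↓ 0`, the affine interpolations of the
discrete minimizing schemes converge to `v t` in `L²(Ω)` for every `t > 0`. -/
def IsMinimizingMovement (Ω : Set (En n)) (u₀ : En n → ℝ) (v : ℝ → En n → ℝ) : Prop :=
  ∃ δ : ℕ → ℝ, (∀ k, 0 < δ k) ∧ Tendsto δ atTop (𝓝 0) ∧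
    ∃ U : ℕ → ℕ → En n → ℝ, ∃ K : ℕ → ℕ → Set (En n),
      (∀ k, U k 0 = u₀) ∧
      (∀ k i, MSAdm Ω (U k (i + 1)) (K k (i + 1)) ∧ ∀ w L, MSAdm Ω w L →
        MSEnergy Ω (1 / δ k) (U k i) (U k (i + 1)) (K k (i + 1)) ≤
          MSEnergy Ω (1 / δ k) (U k i) w L) ∧
      ∀ t > 0, Tendsto (fun k => ∫ x in Ω, (affInterp (δ k) (U k) t x - v t x) ^ 2)
        atTop (𝓝 0)

/-!
With `d` the signed distance to `Ω₁` and `k = √β`, take `z₁ = ψ (k d)` and `z₂ = ψ (-k d)`, where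
`ψ = 1/2 + ∫_{-1}^{·} max (1 - |t|) 0` rises from `1/2` to `3/2` on `[-1, 1]`, with `ψ 0 = 1` and
`ψ' 0 = 1`. The two-sided ball condition of radius `R` makes `d` differentiable on the tube
`|d| < R`, its gradient being the unit normal `ν` at the foot point (squeeze `d` between the
distances to the two tangent balls there), and makes `ν` `(4/R)`-Lipschitz on `|d| ≤ R/2`. Since
`ψ'` vanishes outside `[-1, 1]`, `∇z_i = ± k ψ' (± k d) ∇d` is then `4β`-Lipschitz as soon as
`1/k ≤ R/2`, whence `Δz_i ≤ 4nβ ≤ 8(n+1)β z_i`; and `z₂ = 1/2` at distance `≥ R/2` from `Ω₁`,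
in particular near `∂Ω`.
-/

section Calculus

variable {F : Type*} [NormedAddCommGroup F] [InnerProductSpace ℝ F]

theorem HasFDerivAt.of_squeeze {f g h : F → ℝ} {D : F →L[ℝ] ℝ} {x : F}
    (hg : HasFDerivAt g D x) (hh : HasFDerivAt h D x) (hgf : ∀ y, g y ≤ f y)
    (hfh : ∀ y, f y ≤ h y) (hgx : g x = f x) (hhx : h x = f x) : HasFDerivAt f D x := by
  refine .of_isLittleO <| (Asymptotics.isBigO_of_le _ fun y => ?_).trans_isLittleO
    (hg.isLittleO.norm_left.add hh.isLittleO.norm_left)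
  have := hgf y
  have := hfh y
  simp only [Real.norm_eq_abs]
  rw [abs_le, abs_of_nonneg (add_nonneg (abs_nonneg _) (abs_nonneg _))]
  constructor <;> linarith [neg_abs_le (g y - g x - D (y - x)), le_abs_self (h y - h x - D (y - x)),
    abs_nonneg (g y - g x - D (y - x)), abs_nonneg (h y - h x - D (y - x))]

theorem hasFDerivAt_dist_left {c x : F} (hx : x ≠ c) :
    HasFDerivAt (fun y => dist y c) (‖x - c‖⁻¹ • innerSL ℝ (x - c)) x := by
  have hne : ‖x - c‖ ≠ 0 := norm_ne_zero_iff.2 (sub_ne_zero.2 hx)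
  have h := (Real.hasDerivAt_sqrt (pow_ne_zero 2 hne)).comp_hasFDerivAt x
    ((hasFDerivAt_id x).sub_const c).norm_sq
  have e : (fun y => dist y c) = Real.sqrt ∘ fun y => ‖id y - c‖ ^ 2 :=
    funext fun y => by simp [Real.sqrt_sq (norm_nonneg _), dist_eq_norm]
  rw [e]
  refine h.congr_fderiv ?_
  ext v
  simp [Real.sqrt_sq (norm_nonneg _)]
  ring

theorem lipschitzWith_smul_of_eq_zero_off {X : Type*} [PseudoMetricSpace X] {h : X → ℝ}
    {g : X → F} {s : Set X} {A B M : ℝ≥0} (hh : LipschitzWith A h) (hhB : ∀ x, |h x| ≤ B)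
    (hh0 : ∀ x ∉ s, h x = 0) (hg : LipschitzOnWith M g s) (hg1 : ∀ x ∈ s, ‖g x‖ ≤ 1) :
    LipschitzWith (A + B * M) fun x => h x • g x := by
  have key : ∀ x ∈ s, ∀ y, ‖h x • g x - h y • g y‖ ≤ (A + B * M) * dist x y := by
    intro x hx y
    have hA : |h x - h y| ≤ A * dist x y := by
      simpa only [Real.dist_eq] using hh.dist_le_mul x y
    by_cases hy : y ∈ s
    · have hM : ‖g x - g y‖ ≤ M * dist x y := by
        simpa only [dist_eq_norm] using hg.dist_le_mul x hx y hy
      calc ‖h x • g x - h y • g y‖ = ‖(h x - h y) • g x + h y • (g x - g y)‖ := by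
            congr 1; rw [sub_smul, smul_sub]; abel
        _ ≤ |h x - h y| * 1 + B * (M * dist x y) := by
            refine (norm_add_le _ _).trans (add_le_add ?_ ?_) <;> rw [norm_smul, Real.norm_eq_abs]
            · exact mul_le_mul_of_nonneg_left (hg1 x hx) (abs_nonneg _)
            · exact mul_le_mul (hhB y) hM (norm_nonneg _) B.2
        _ ≤ (A + B * M) * dist x y := by nlinarith [dist_nonneg (x := x) (y := y), B.2, M.2]
    · calc ‖h x • g x - h y • g y‖ = |h x - h y| * ‖g x‖ := by
            rw [hh0 y hy, zero_smul, sub_zero, sub_zero, norm_smul, Real.norm_eq_abs]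
        _ ≤ A * dist x y * 1 := mul_le_mul hA (hg1 x hx) (norm_nonneg _) (by positivity)
        _ ≤ (A + B * M) * dist x y := by
            rw [mul_one]
            exact mul_le_mul_of_nonneg_right (le_add_of_nonneg_right (by positivity)) dist_nonneg
  refine LipschitzWith.of_dist_le_mul fun x y => ?_
  rw [dist_eq_norm, NNReal.coe_add, NNReal.coe_mul]
  by_cases hx : x ∈ s
  · exact key x hx y
  by_cases hy : y ∈ s
  · rw [norm_sub_rev, dist_comm]; exact key y hy x
  · simp only [hh0 x hx, hh0 y hy, zero_smul, sub_zero, norm_zero]; positivity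

theorem contDiff_one_of_lipschitzWith_gradient [CompleteSpace F] {u : F → ℝ} {K : ℝ≥0}
    (hu : Differentiable ℝ u) (hK : LipschitzWith K (gradient u)) : ContDiff ℝ 1 u := by
  refine contDiff_one_iff_fderiv.2 ⟨hu, ?_⟩
  rw [← toDual_comp_gradient]
  exact (InnerProductSpace.toDual ℝ F).continuous.comp hK.continuous

end Calculus

theorem infDist_le_dist_sub_of_ball_subset {F : Type*} [NormedAddCommGroup F] [NormedSpace ℝ F]
    {s : Set F} {c x : F} {r : ℝ} (hr : 0 < r) (hs : ball c r ⊆ s) (hx : r ≤ dist x c) :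
    infDist x s ≤ dist x c - r := by
  have hxc : 0 < dist x c := hr.trans_le hx
  set z := AffineMap.lineMap c x (r / dist x c)
  have hz : z ∈ closure (ball c r) := by
    rw [closure_ball c hr.ne', mem_closedBall, dist_lineMap_left, Real.norm_eq_abs,
      abs_of_pos (by positivity), dist_comm c x, div_mul_cancel₀ _ hxc.ne']
  calc infDist x s ≤ infDist x (ball c r) := infDist_le_infDist_of_subset hs ⟨c, mem_ball_self hr⟩
    _ = infDist x (closure (ball c r)) := infDist_closure.symm
    _ ≤ dist x z := infDist_le_dist_of_mem hz
    _ = dist x c - r := by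
      rw [dist_comm, dist_lineMap_right, Real.norm_eq_abs, abs_of_nonneg, dist_comm c x,
        sub_mul, one_mul, div_mul_cancel₀ _ hxc.ne']
      rw [sub_nonneg, div_le_one hxc]; exact hx

theorem lapl_le_of_lipschitzWith_gradient {u : En n → ℝ} {K : ℝ≥0}
    (hK : LipschitzWith K (gradient u)) (x : En n) : lapl u x ≤ n * K := by
  have hterm : ∀ i : Fin n, fderiv ℝ (fun y => fderiv ℝ u y (EuclideanSpace.single i 1)) x
      (EuclideanSpace.single i 1) ≤ K := by
    intro i
    set e : En n := EuclideanSpace.single i 1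
    have he : ‖e‖ = 1 := by simp [e]
    have hlip : LipschitzWith K fun y => fderiv ℝ u y e := by
      have h1 : ‖innerSL ℝ e‖₊ = 1 := by ext; simp [he]
      have h := (innerSL ℝ e).lipschitz.comp hK
      simp only [← inner_gradient_left]
      simpa [h1, Function.comp_def, real_inner_comm e] using h
    calc _ ≤ ‖fderiv ℝ (fun y => fderiv ℝ u y e) x‖ * ‖e‖ :=
          (Real.le_norm_self _).trans (ContinuousLinearMap.le_opNorm _ _)
      _ ≤ K := by rw [he, mul_one]; exact norm_fderiv_le_of_lipschitz ℝ hlip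
  calc lapl u x ≤ ∑ _i : Fin n, (K : ℝ) := Finset.sum_le_sum fun i _ => hterm i
    _ = n * K := by simp

namespace Barrier

section Profile

def rampSq (s : ℝ) : ℝ := max s 0 ^ 2 / 2

theorem hasDerivAt_rampSq (s : ℝ) : HasDerivAt rampSq (max s 0) s := by
  refine hasDerivAt_of_hasDerivAt_of_ne' (x := 0) (fun t ht => ?_)
    (show Continuous rampSq by unfold rampSq; fun_prop).continuousAt
    (continuous_id.max continuous_const).continuousAt s
  rcases ht.lt_or_gt with ht | ht
  · have : rampSq =ᶠ[𝓝 t] fun _ => 0 := by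
      filter_upwards [Iio_mem_nhds ht] with u (hu : u < 0)
      simp [rampSq, max_eq_right hu.le]
    simpa [max_eq_right ht.le] using (hasDerivAt_const t (0 : ℝ)).congr_of_eventuallyEq this
  · have : rampSq =ᶠ[𝓝 t] fun u => u ^ 2 / 2 := by
      filter_upwards [Ioi_mem_nhds ht] with u (hu : 0 < u)
      simp [rampSq, max_eq_left hu.le]
    simpa [max_eq_left ht.le] using ((hasDerivAt_pow 2 t).div_const 2).congr_of_eventuallyEq this

def hat (u : ℝ) : ℝ := max (1 - |u|) 0

/-- `∫_{-1}^u hat`, written as a second difference of `rampSq`. -/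
def profile (u : ℝ) : ℝ := rampSq (u + 1) - 2 * rampSq u + rampSq (u - 1)

theorem hat_eq (u : ℝ) : hat u = max (u + 1) 0 - 2 * max u 0 + max (u - 1) 0 := by
  unfold hat
  rcases le_total u 0 with h | h
  · rw [abs_of_nonpos h, max_eq_right h, max_eq_right (by linarith : u - 1 ≤ 0)]
    rcases le_total u (-1) with h' | h'
    · rw [max_eq_right (by linarith), max_eq_right (by linarith)]; ring
    · rw [max_eq_left (by linarith), max_eq_left (by linarith)]; ring
  · rw [abs_of_nonneg h, max_eq_left h, max_eq_left (by linarith : 0 ≤ u + 1)]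
    rcases le_total u 1 with h' | h'
    · rw [max_eq_left (by linarith), max_eq_right (by linarith)]; ring
    · rw [max_eq_right (by linarith), max_eq_left (by linarith)]; ring

theorem hasDerivAt_profile (u : ℝ) : HasDerivAt profile (hat u) u := by
  rw [hat_eq]
  exact (((hasDerivAt_rampSq (u + 1)).comp_add_const u 1).sub
    ((hasDerivAt_rampSq u).const_mul 2)).add ((hasDerivAt_rampSq (u - 1)).comp_sub_const u 1)

theorem hat_nonneg (u : ℝ) : 0 ≤ hat u := le_max_right _ _

theorem hat_le_one (u : ℝ) : hat u ≤ 1 := max_le (by linarith [abs_nonneg u]) zero_le_one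

theorem hat_zero : hat 0 = 1 := by norm_num [hat]

theorem hat_eq_zero {u : ℝ} (h : 1 ≤ |u|) : hat u = 0 := max_eq_right (by linarith)

theorem hat_mul_eq_zero {k a : ℝ} (hk : 0 < k) (ha : 1 / k ≤ |a|) : hat (k * a) = 0 := by
  rw [div_le_iff₀ hk] at ha
  exact hat_eq_zero (by rw [abs_mul, abs_of_pos hk]; linarith)

theorem lipschitzWith_hat : LipschitzWith 1 hat := LipschitzWith.of_dist_le_mul fun a b => by
  simp only [NNReal.coe_one, one_mul, Real.dist_eq, hat]
  calc |max (1 - |a|) 0 - max (1 - |b|) 0| ≤ |(1 - |a|) - (1 - |b|)| :=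
        abs_max_sub_max_le_abs _ _ _
    _ = |(|b| - |a|)| := by ring_nf
    _ ≤ |b - a| := abs_abs_sub_abs_le_abs_sub _ _
    _ = |a - b| := abs_sub_comm _ _

theorem profile_monotone : Monotone profile :=
  monotone_of_deriv_nonneg (fun u => (hasDerivAt_profile u).differentiableAt) fun u => by
    rw [(hasDerivAt_profile u).deriv]; exact hat_nonneg u

theorem profile_of_le_neg_one {u : ℝ} (h : u ≤ -1) : profile u = 0 := by
  simp only [profile, rampSq, max_eq_right (by linarith : u + 1 ≤ 0),
    max_eq_right (by linarith : u ≤ 0), max_eq_right (by linarith : u - 1 ≤ 0)]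
  ring

theorem profile_of_one_le {u : ℝ} (h : 1 ≤ u) : profile u = 1 := by
  simp only [profile, rampSq, max_eq_left (by linarith : 0 ≤ u + 1),
    max_eq_left (by linarith : 0 ≤ u), max_eq_left (by linarith : 0 ≤ u - 1)]
  ring

theorem profile_zero : profile 0 = 1 / 2 := by norm_num [profile, rampSq]

theorem profile_nonneg (u : ℝ) : 0 ≤ profile u := by
  rcases le_total u (-1) with h | h
  · exact (profile_of_le_neg_one h).ge
  · exact (profile_of_le_neg_one le_rfl).symm.le.trans (profile_monotone h)

theorem profile_le_half {u : ℝ} (h : u ≤ 0) : profile u ≤ 1 / 2 :=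
  profile_zero ▸ profile_monotone h

end Profile

section TangentBalls

variable {R : ℝ} {E : Set (En n)} {x y p p' q ν ν' : En n}

structure TangentBalls (R : ℝ) (E : Set (En n)) (p ν : En n) : Prop where
  norm_eq_one : ‖ν‖ = 1
  ball_subset : ball (p - R • ν) R ⊆ E
  ball_subset_compl : ball (p + R • ν) R ⊆ Eᶜ

theorem TangentBalls.compl (h : TangentBalls R E p ν) : TangentBalls R Eᶜ p (-ν) where
  norm_eq_one := by rw [norm_neg, h.norm_eq_one]
  ball_subset := by simpa [sub_eq_add_neg] using h.ball_subset_compl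
  ball_subset_compl := by simpa [← sub_eq_add_neg] using h.ball_subset

def BallCondition (R : ℝ) (E : Set (En n)) : Prop :=
  ∀ p ∈ frontier E, ∃ ν, TangentBalls R E p ν

theorem BallCondition.compl (h : BallCondition R E) : BallCondition R Eᶜ := fun p hp => by
  obtain ⟨ν, hν⟩ := h p (frontier_compl E ▸ hp)
  exact ⟨-ν, hν.compl⟩

theorem UR.ballCondition (hR : 0 < R) (h : UR R E) : BallCondition R E := by
  intro p hp
  obtain ⟨p', p'', hp', hp'', hin, hout⟩ := h.2 p hp
  have hsep : R + R ≤ dist p' p'' :=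
    (disjoint_ball_ball_iff hR hR).1 (disjoint_compl_right.mono hin hout)
  have hnorm : ‖p - p'‖ = R := by rw [← dist_eq_norm, hp']
  have hnorm' : ‖p'' - p‖ = R := by rw [← dist_eq_norm, dist_comm, hp'']
  -- equality in the triangle inequality: `p` is the midpoint of `p'` and `p''`
  have hmid : p'' - p = p - p' := by
    have : ‖p - p'‖ + ‖p'' - p‖ ≤ ‖(p - p') + (p'' - p)‖ := by
      rw [hnorm, hnorm', show (p - p') + (p'' - p) = -(p' - p'') by abel, norm_neg,
        ← dist_eq_norm]
      exact hsep
    have h' := norm_add_eq_iff_real.1 (le_antisymm (norm_add_le _ _) this)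
    rw [hnorm, hnorm'] at h'
    exact (smul_right_injective _ hR.ne' h').symm
  refine ⟨R⁻¹ • (p - p'), ⟨?_, ?_, ?_⟩⟩
  · rw [norm_smul, hnorm, norm_inv, Real.norm_of_nonneg hR.le, inv_mul_cancel₀ hR.ne']
  · rwa [smul_smul, mul_inv_cancel₀ hR.ne', one_smul, sub_sub_cancel]
  · rwa [smul_smul, mul_inv_cancel₀ hR.ne', one_smul, ← hmid, add_sub_cancel]

theorem sgnDist_compl (E : Set (En n)) (x : En n) : sgnDist Eᶜ x = -sgnDist E x := by
  simp only [sgnDist, compl_compl]; ring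

theorem sgnDist_of_mem (hx : x ∈ E) : sgnDist E x = -infDist x Eᶜ := by
  simp [sgnDist, infDist_zero_of_mem hx]

theorem sgnDist_nonpos_of_mem (hx : x ∈ E) : sgnDist E x ≤ 0 := by
  rw [sgnDist_of_mem hx, neg_nonpos]; exact infDist_nonneg

theorem sgnDist_of_mem_frontier (hx : x ∈ frontier E) : sgnDist E x = 0 := by
  rw [frontier_eq_closure_inter_closure] at hx
  simp [sgnDist, infDist_zero_of_mem_closure hx.1, infDist_zero_of_mem_closure hx.2]

theorem lipschitzWith_sgnDist (E : Set (En n)) : LipschitzWith 2 (sgnDist E) := by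
  have h := (lipschitz_infDist_pt E).sub (lipschitz_infDist_pt Eᶜ)
  rwa [one_add_one_eq_two] at h

structure IsFoot (R : ℝ) (E : Set (En n)) (x p ν : En n) : Prop extends TangentBalls R E p ν where
  mem_frontier : p ∈ frontier E
  eq_add_smul : x = p + sgnDist E x • ν

theorem IsFoot.compl (h : IsFoot R E x p ν) : IsFoot R Eᶜ x p (-ν) where
  toTangentBalls := h.toTangentBalls.compl
  mem_frontier := (frontier_compl E).symm ▸ h.mem_frontier
  eq_add_smul := by rw [sgnDist_compl, smul_neg, neg_smul, neg_neg]; exact h.eq_add_smul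

theorem exists_isFoot_of_mem (hR : 0 < R) (hE : BallCondition R E) (hEc : Eᶜ.Nonempty)
    (hx : x ∈ E) : ∃ p ν, IsFoot R E x p ν := by
  obtain ⟨q, hqc, hq⟩ := exists_mem_closure_infDist_eq_dist hEc x
  set u := infDist x Eᶜ
  -- a nearest point of `Eᶜ` cannot have a ball of `Eᶜ` around it
  have hqE : q ∈ closure E := by
    by_contra hqE
    obtain ⟨ε, hε, hball⟩ := Metric.isOpen_iff.1 isClosed_closure.isOpen_compl q hqE
    have hxq : 0 < dist x q := dist_pos.2 fun h => hqE (h ▸ subset_closure hx)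
    have := infDist_le_dist_sub_of_ball_subset (s := Eᶜ) (lt_min hε hxq)
      ((ball_subset_ball (min_le_left _ _)).trans
        (hball.trans fun y hy hyE => hy (subset_closure hyE))) (min_le_right _ _)
    linarith [lt_min hε hxq]
  have hqf : q ∈ frontier E := by rw [frontier_eq_closure_inter_closure]; exact ⟨hqE, hqc⟩
  obtain ⟨ν, hν⟩ := hE q hqf
  have hfar : R ≤ dist x (q + R • ν) := not_lt.1 fun h => hν.ball_subset_compl h hx
  have hle := infDist_le_dist_sub_of_ball_subset hR hν.ball_subset_compl hfar
  -- `x`, `q` and the centre `q + R • ν` of the outer ball are aligned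
  have hal : ‖x - q‖ + ‖R • -ν‖ ≤ ‖(x - q) + R • -ν‖ := by
    rw [norm_smul, norm_neg, hν.norm_eq_one, Real.norm_of_nonneg hR.le, mul_one, ← dist_eq_norm,
      ← hq, show x - q + R • -ν = x - (q + R • ν) by rw [smul_neg]; abel, ← dist_eq_norm]
    linarith
  have h' := norm_add_eq_iff_real.1 (le_antisymm (norm_add_le _ _) hal)
  rw [norm_smul, norm_neg, hν.norm_eq_one, Real.norm_of_nonneg hR.le, mul_one, ← dist_eq_norm,
    ← hq, smul_comm, smul_neg] at h'
  refine ⟨q, ν, hν, hqf, ?_⟩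
  rw [sgnDist_of_mem hx, neg_smul, ← smul_neg]
  change x = q + u • -ν
  rw [smul_neg, ← smul_right_injective _ hR.ne' h']
  abel

theorem exists_isFoot (hR : 0 < R) (hE : BallCondition R E) (hne : (frontier E).Nonempty)
    (x : En n) : ∃ p ν, IsFoot R E x p ν := by
  obtain ⟨hE₁, hE₂⟩ := nonempty_frontier_iff.1 hne
  by_cases hx : x ∈ E
  · exact exists_isFoot_of_mem hR hE (nonempty_compl.2 hE₂) hx
  · obtain ⟨p, ν, h⟩ := exists_isFoot_of_mem hR hE.compl (by rwa [compl_compl]) hx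
    exact ⟨p, -ν, by simpa using h.compl⟩

theorem sgnDist_le_dist_sub {c : En n} {r : ℝ} (hr : 0 < r) (hc : ball c r ⊆ E)
    (hEc : Eᶜ.Nonempty) (y : En n) : sgnDist E y ≤ dist y c - r := by
  rcases le_or_gt r (dist y c) with h | h
  · have := infDist_le_dist_sub_of_ball_subset hr hc h
    rw [sgnDist]
    linarith [infDist_nonneg (x := y) (s := Eᶜ)]
  · rw [sgnDist_of_mem (hc (mem_ball.2 h))]
    have : r - dist y c ≤ infDist y Eᶜ := (le_infDist hEc).2 fun z hz => not_lt.1 fun hzy =>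
      hz (hc (by rw [mem_ball]; linarith [dist_triangle z y c, dist_comm y z]))
    linarith

theorem sub_dist_le_sgnDist {c : En n} {r : ℝ} (hr : 0 < r) (hc : ball c r ⊆ Eᶜ)
    (hE : E.Nonempty) (y : En n) : r - dist y c ≤ sgnDist E y := by
  have := sgnDist_le_dist_sub hr hc (by rwa [compl_compl]) y
  rw [sgnDist_compl] at this
  linarith

theorem TangentBalls.hasGradientAt_sgnDist {r : ℝ} (h : TangentBalls r E p ν) (hr : 0 < r)
    (hx : x = p + sgnDist E x • ν) (hxr : |sgnDist E x| < r) (hE : E.Nonempty)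
    (hEc : Eᶜ.Nonempty) : HasGradientAt (sgnDist E) ν x := by
  set d := sgnDist E x
  obtain ⟨hd₁, hd₂⟩ := abs_lt.1 hxr
  have hin : x - (p - r • ν) = (r + d) • ν := by rw [hx, add_smul]; abel
  have hout : x - (p + r • ν) = -((r - d) • ν) := by rw [hx, sub_smul]; abel
  have hnin : ‖x - (p - r • ν)‖ = r + d := by
    rw [hin, norm_smul, h.norm_eq_one, mul_one, Real.norm_of_nonneg (by linarith)]
  have hnout : ‖x - (p + r • ν)‖ = r - d := by
    rw [hout, norm_neg, norm_smul, h.norm_eq_one, mul_one, Real.norm_of_nonneg (by linarith)]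
  have hup := (hasFDerivAt_dist_left (c := p - r • ν) (x := x)
    (sub_ne_zero.1 fun h0 => by rw [h0, norm_zero] at hnin; linarith)).sub_const r
  have hlow := (hasFDerivAt_dist_left (c := p + r • ν) (x := x)
    (sub_ne_zero.1 fun h0 => by rw [h0, norm_zero] at hnout; linarith)).const_sub r
  rw [hnin, hin, map_smul, smul_smul, inv_mul_cancel₀ (by linarith), one_smul] at hup
  rw [hnout, hout, map_neg, map_smul, smul_neg, smul_smul, inv_mul_cancel₀ (by linarith),
    one_smul, neg_neg] at hlow
  refine hasGradientAt_iff_hasFDerivAt.2 (HasFDerivAt.of_squeeze hlow hup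
    (sub_dist_le_sgnDist hr h.ball_subset_compl hE) (sgnDist_le_dist_sub hr h.ball_subset hEc)
    ?_ ?_)
  · rw [dist_eq_norm, hnout]; ring
  · rw [dist_eq_norm, hnin]; ring

theorem IsFoot.hasGradientAt_sgnDist (h : IsFoot R E x p ν) (hR : 0 < R)
    (hxR : |sgnDist E x| < R) (hne : (frontier E).Nonempty) :
    HasGradientAt (sgnDist E) ν x :=
  h.toTangentBalls.hasGradientAt_sgnDist hR h.eq_add_smul hxR (nonempty_frontier_iff.1 hne).1
    (nonempty_compl.2 (nonempty_frontier_iff.1 hne).2)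

theorem differentiableAt_sgnDist (hR : 0 < R) (hE : BallCondition R E)
    (hne : (frontier E).Nonempty) (hx : |sgnDist E x| < R) : DifferentiableAt ℝ (sgnDist E) x :=
  let ⟨_, _, h⟩ := exists_isFoot hR hE hne x
  (h.hasGradientAt_sgnDist hR hx hne).differentiableAt

theorem norm_gradient_sgnDist (hR : 0 < R) (hE : BallCondition R E)
    (hne : (frontier E).Nonempty) (hx : |sgnDist E x| < R) : ‖gradient (sgnDist E) x‖ = 1 := by
  obtain ⟨p, ν, h⟩ := exists_isFoot hR hE hne x
  rw [(h.hasGradientAt_sgnDist hR hx hne).gradient, h.norm_eq_one]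

theorem TangentBalls.neg_two_mul_inner_le (h : TangentBalls R E p ν) (hR : 0 ≤ R)
    (hq : q ∉ interior E) : -(2 * R * ⟪q - p, ν⟫) ≤ ‖q - p‖ ^ 2 := by
  have hfar : R ≤ ‖(q - p) + R • ν‖ := by
    rw [show (q - p) + R • ν = q - (p - R • ν) by abel, ← dist_eq_norm]
    exact not_lt.1 fun hlt => hq (interior_maximal h.ball_subset isOpen_ball (mem_ball.2 hlt))
  have hsq := pow_le_pow_left₀ hR hfar 2
  rw [norm_add_sq_real, norm_smul, h.norm_eq_one, Real.norm_of_nonneg hR, inner_smul_right]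
    at hsq
  nlinarith

theorem TangentBalls.two_mul_abs_inner_le (h : TangentBalls R E p ν) (hR : 0 ≤ R)
    (hq : q ∈ frontier E) : 2 * R * |⟪q - p, ν⟫| ≤ ‖q - p‖ ^ 2 := by
  have h₁ := h.neg_two_mul_inner_le hR hq.2
  have h₂ := h.compl.neg_two_mul_inner_le hR ((frontier_compl E).symm ▸ hq).2
  rw [inner_neg_right] at h₂
  cases abs_cases ⟪q - p, ν⟫ <;> nlinarith

theorem IsFoot.inner_le (h : IsFoot R E x p ν) (hR : 0 < R) (hx : |sgnDist E x| ≤ R / 2)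
    (hq : q ∈ frontier E) : ⟪x - p, q - p⟫ ≤ ‖q - p‖ ^ 2 / 4 := by
  have hi := h.two_mul_abs_inner_le hR.le hq
  have hxp : x - p = sgnDist E x • ν := by nth_rw 1 [h.eq_add_smul]; abel
  rw [hxp, inner_smul_left, real_inner_comm]
  calc sgnDist E x * ⟪q - p, ν⟫ ≤ |sgnDist E x| * |⟪q - p, ν⟫| := by
        rw [← abs_mul]; exact le_abs_self _
    _ ≤ R / 2 * |⟪q - p, ν⟫| := by gcongr
    _ ≤ ‖q - p‖ ^ 2 / 4 := by nlinarith

theorem IsFoot.norm_sub_le (hx : IsFoot R E x p ν) (hy : IsFoot R E y p' ν') (hR : 0 < R)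
    (hxR : |sgnDist E x| ≤ R / 2) (hyR : |sgnDist E y| ≤ R / 2) :
    ‖p' - p‖ ≤ 2 * dist x y := by
  have h₁ := hx.inner_le hR hxR hy.mem_frontier
  have h₂ := hy.inner_le hR hyR hx.mem_frontier
  have h₃ : ⟪y - x, p' - p⟫ ≤ dist x y * ‖p' - p‖ := by
    rw [dist_comm, dist_eq_norm]; exact real_inner_le_norm _ _
  have hsplit : ‖p' - p‖ ^ 2 = ⟪x - p, p' - p⟫ + ⟪y - p', p - p'⟫ + ⟪y - x, p' - p⟫ := by
    rw [← real_inner_self_eq_norm_sq, show p - p' = -(p' - p) by abel, inner_neg_right,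
      ← sub_eq_add_neg, ← inner_sub_left, ← inner_add_left]
    congr 1; abel
  rw [norm_sub_rev p p'] at h₂
  nlinarith [norm_nonneg (p' - p), dist_nonneg (x := x) (y := y)]

theorem TangentBalls.mul_norm_sub_le (h : TangentBalls R E p ν) (h' : TangentBalls R E p' ν')
    (hR : 0 < R) (hp : p ∈ frontier E) (hp' : p' ∈ frontier E) :
    R * ‖ν - ν'‖ ≤ 2 * ‖p' - p‖ := by
  -- the inner ball at `p'` and the outer ball at `p` are disjoint
  have hsep : R + R ≤ ‖(p' - p) - R • (ν + ν')‖ := by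
    rw [show (p' - p) - R • (ν + ν') = (p' - R • ν') - (p + R • ν) by rw [smul_add]; abel,
      ← dist_eq_norm]
    exact (disjoint_ball_ball_iff hR hR).1
      (disjoint_compl_right.mono h'.ball_subset h.ball_subset_compl)
  have hsq := pow_le_pow_left₀ (by linarith) hsep 2
  have hpar : ‖ν + ν'‖ ^ 2 + ‖ν - ν'‖ ^ 2 = 4 := by
    rw [norm_add_sq_real, norm_sub_sq_real, h.norm_eq_one, h'.norm_eq_one]; ring
  rw [norm_sub_sq_real, norm_smul, Real.norm_of_nonneg hR.le, inner_smul_right, inner_add_right]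
    at hsq
  have h₁ := h.two_mul_abs_inner_le hR.le hp'
  have h₂ := h'.two_mul_abs_inner_le hR.le hp
  rw [show p - p' = -(p' - p) by abel, inner_neg_left, abs_neg, norm_neg] at h₂
  have j₁ := mul_le_mul_of_nonneg_left (neg_abs_le ⟪p' - p, ν⟫) (by positivity : 0 ≤ 2 * R)
  have j₂ := mul_le_mul_of_nonneg_left (neg_abs_le ⟪p' - p, ν'⟫) (by positivity : 0 ≤ 2 * R)
  have e : (R * ‖ν + ν'‖) ^ 2 = R ^ 2 * 4 - (R * ‖ν - ν'‖) ^ 2 := by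
    rw [mul_pow, mul_pow, ← hpar]; ring
  have hkey : (R * ‖ν - ν'‖) ^ 2 ≤ (2 * ‖p' - p‖) ^ 2 := by nlinarith
  exact (pow_le_pow_iff_left₀ (by positivity) (by positivity) two_ne_zero).1 hkey

theorem lipschitzOnWith_gradient_sgnDist (hR : 0 < R) (hE : BallCondition R E)
    (hne : (frontier E).Nonempty) :
    LipschitzOnWith (Real.toNNReal (4 / R)) (gradient (sgnDist E)) {x | |sgnDist E x| ≤ R / 2} := by
  refine LipschitzOnWith.of_dist_le_mul
    fun x (hx : |sgnDist E x| ≤ R / 2) y (hy : |sgnDist E y| ≤ R / 2) => ?_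
  obtain ⟨p, ν, hpx⟩ := exists_isFoot hR hE hne x
  obtain ⟨p', ν', hpy⟩ := exists_isFoot hR hE hne y
  rw [(hpx.hasGradientAt_sgnDist hR (by linarith) hne).gradient,
    (hpy.hasGradientAt_sgnDist hR (by linarith) hne).gradient, dist_eq_norm,
    Real.coe_toNNReal _ (by positivity)]
  have h₁ := hpx.mul_norm_sub_le hpy.toTangentBalls hR hpx.mem_frontier hpy.mem_frontier
  have h₂ := hpx.norm_sub_le hpy hR hx hy
  rw [div_mul_eq_mul_div, le_div_iff₀ hR]
  linarith

end TangentBalls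

/-- With `f` the signed distance to `Ω₁` (resp. to its complement) and `k = √β`, this is the
paper's `z_{1,β}` (resp. `z_{2,β}`). -/
def barrier {F : Type*} (k : ℝ) (f : F → ℝ) (x : F) : ℝ := 1 / 2 + profile (k * f x)

theorem half_le_barrier {F : Type*} (k : ℝ) (f : F → ℝ) (x : F) : 1 / 2 ≤ barrier k f x :=
  le_add_of_nonneg_right (profile_nonneg _)

theorem barrier_mem_Icc {F : Type*} {f : F → ℝ} {k : ℝ} (hk : 0 ≤ k) {x : F} (hx : f x ≤ 0) :
    barrier k f x ∈ Icc (1 / 2 : ℝ) 1 := by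
  have := profile_le_half (mul_nonpos_of_nonneg_of_nonpos hk hx)
  exact ⟨half_le_barrier k f x, by rw [barrier]; linarith⟩

theorem barrier_eq_one {F : Type*} {f : F → ℝ} (k : ℝ) {x : F} (hx : f x = 0) :
    barrier k f x = 1 := by
  rw [barrier, hx, mul_zero, profile_zero]; norm_num

theorem barrier_eq_half {F : Type*} {f : F → ℝ} {k : ℝ} {x : F} (hx : k * f x ≤ -1) :
    barrier k f x = 1 / 2 := by
  rw [barrier, profile_of_le_neg_one hx, add_zero]

theorem coe_pos_of_one_lt_mul {k : ℝ≥0} {r : ℝ} (hkr : 1 < k * r) : (0 : ℝ) < k :=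
  (NNReal.coe_nonneg k).lt_of_ne fun h => by rw [← h, zero_mul] at hkr; linarith

section BarrierGradient

variable {F : Type*} [NormedAddCommGroup F] [InnerProductSpace ℝ F] [CompleteSpace F]
  {f : F → ℝ} {k : ℝ≥0} {r : ℝ}

theorem hasGradientAt_barrier (hkr : 1 < k * r) (hf : Continuous f)
    (hdiff : ∀ x, |f x| < r → DifferentiableAt ℝ f x) (x : F) :
    HasGradientAt (barrier k f) ((k * hat (k * f x)) • gradient f x) x := by
  by_cases hx : |f x| < r
  · have h := ((hasDerivAt_profile _).comp_hasFDerivAt x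
      ((hdiff x hx).hasGradientAt.hasFDerivAt.const_mul (k : ℝ))).const_add (1 / 2)
    refine hasGradientAt_iff_hasFDerivAt.2 (h.congr_fderiv ?_)
    rw [map_smul, smul_smul, mul_comm]
  -- away from the tube `barrier k f` is locally constant
  · have hk : 1 < |k * f x| := by
      rw [abs_mul, NNReal.abs_eq]; nlinarith [NNReal.coe_nonneg k]
    have hkf : Continuous fun y => (k : ℝ) * f y := continuous_const.mul hf
    have hconst : barrier k f =ᶠ[𝓝 x] fun _ => barrier k f x := by
      rcases lt_abs.1 hk with h | h
      · filter_upwards [hkf.continuousAt.eventually (Ioi_mem_nhds h)] with y (hy : 1 < _)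
        simp only [barrier, profile_of_one_le hy.le, profile_of_one_le h.le]
      · filter_upwards [hkf.continuousAt.eventually (Iio_mem_nhds (lt_neg.1 h))]
          with y (hy : _ < -1)
        simp only [barrier, profile_of_le_neg_one hy.le, profile_of_le_neg_one (lt_neg.1 h).le]
    rw [hat_eq_zero hk.le, mul_zero, zero_smul]
    exact (hasGradientAt_const x _).congr_of_eventuallyEq hconst

theorem gradient_barrier (hkr : 1 < k * r) (hf : Continuous f)
    (hdiff : ∀ x, |f x| < r → DifferentiableAt ℝ f x) :
    gradient (barrier k f) = fun x => (k * hat (k * f x)) • gradient f x :=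
  funext fun x => (hasGradientAt_barrier hkr hf hdiff x).gradient

theorem lipschitzWith_gradient_barrier {L M : ℝ≥0} (hkr : 1 < k * r) (hf : LipschitzWith L f)
    (hdiff : ∀ x, |f x| < r → DifferentiableAt ℝ f x)
    (hg : LipschitzOnWith M (gradient f) {x | |f x| < 1 / (k : ℝ)})
    (hg1 : ∀ x, |f x| < 1 / (k : ℝ) → ‖gradient f x‖ ≤ 1) :
    LipschitzWith (k * (k * L) + k * M) (gradient (barrier k f)) := by
  rw [gradient_barrier hkr hf.continuous hdiff]
  refine lipschitzWith_smul_of_eq_zero_off (LipschitzWith.of_dist_le_mul fun x y => ?_)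
    (fun x => ?_) (fun x hx => ?_) hg hg1
  · have h := lipschitzWith_hat.dist_le_mul (k * f x) (k * f y)
    rw [NNReal.coe_one, one_mul, Real.dist_eq, Real.dist_eq, ← mul_sub, abs_mul,
      NNReal.abs_eq] at h
    rw [Real.dist_eq, ← mul_sub, abs_mul, NNReal.abs_eq, NNReal.coe_mul, NNReal.coe_mul,
      mul_assoc, mul_assoc]
    gcongr
    exact h.trans (mul_le_mul_of_nonneg_left (by simpa [Real.dist_eq] using hf.dist_le_mul x y)
      k.coe_nonneg)
  · rw [abs_of_nonneg (mul_nonneg k.coe_nonneg (hat_nonneg _))]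
    exact mul_le_of_le_one_right k.coe_nonneg (hat_le_one _)
  · rw [hat_mul_eq_zero (coe_pos_of_one_lt_mul hkr) (not_lt.1 hx), mul_zero]

theorem norm_gradient_barrier_le (hkr : 1 < k * r) (hf : Continuous f)
    (hdiff : ∀ x, |f x| < r → DifferentiableAt ℝ f x)
    (hg1 : ∀ x, |f x| < 1 / (k : ℝ) → ‖gradient f x‖ ≤ 1) (x : F) :
    ‖gradient (barrier k f) x‖ ≤ k := by
  rw [gradient_barrier hkr hf hdiff, norm_smul,
    Real.norm_of_nonneg (mul_nonneg k.coe_nonneg (hat_nonneg _))]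
  by_cases hx : |f x| < 1 / (k : ℝ)
  · calc (k : ℝ) * hat (k * f x) * ‖gradient f x‖ ≤ k * 1 * 1 := by
          gcongr
          · exact hat_le_one _
          · exact hg1 x hx
      _ = k := by ring
  · rw [hat_mul_eq_zero (coe_pos_of_one_lt_mul hkr) (not_lt.1 hx), mul_zero, zero_mul]
    exact k.coe_nonneg

end BarrierGradient

section BarrierSgnDist

variable {R : ℝ} {E : Set (En n)} {k : ℝ≥0}

theorem one_lt_mul_of_two_div_le (hR : 0 < R) (hk : 2 / R ≤ k) : 1 < k * R := by
  rw [div_le_iff₀ hR] at hk; linarith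

theorem hasGradientAt_barrier_sgnDist (hR : 0 < R) (hE : BallCondition R E)
    (hne : (frontier E).Nonempty) (hk : 2 / R ≤ k) (x : En n) :
    HasGradientAt (barrier k (sgnDist E))
      ((k * hat (k * sgnDist E x)) • gradient (sgnDist E) x) x :=
  hasGradientAt_barrier (one_lt_mul_of_two_div_le hR hk) (lipschitzWith_sgnDist E).continuous
    (fun _ hx => differentiableAt_sgnDist hR hE hne hx) x

theorem lipschitzWith_gradient_barrier_sgnDist (hR : 0 < R) (hE : BallCondition R E)
    (hne : (frontier E).Nonempty) (hk : 2 / R ≤ k) :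
    LipschitzWith (4 * k ^ 2) (gradient (barrier k (sgnDist E))) := by
  have hkR := one_lt_mul_of_two_div_le hR hk
  have hk' : 1 / (k : ℝ) ≤ R / 2 := by
    rw [div_le_iff₀ (coe_pos_of_one_lt_mul hkR)]; rw [div_le_iff₀ hR] at hk; linarith
  have htube : {x | |sgnDist E x| < 1 / (k : ℝ)} ⊆ {x | |sgnDist E x| ≤ R / 2} :=
    ofPred_subset_ofPred.2 fun x hx => by linarith
  refine (lipschitzWith_gradient_barrier hkR (lipschitzWith_sgnDist E)
    (fun x hx => differentiableAt_sgnDist hR hE hne hx)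
    ((lipschitzOnWith_gradient_sgnDist hR hE hne).mono htube)
    (fun x hx => (norm_gradient_sgnDist hR hE hne (by linarith)).le)).weaken ?_
  rw [← NNReal.coe_le_coe]
  push_cast
  rw [Real.coe_toNNReal _ (by positivity)]
  have : 4 / R ≤ 2 * k := by rw [div_le_iff₀ hR] at hk ⊢; linarith
  nlinarith [k.coe_nonneg]

theorem norm_gradient_barrier_sgnDist_le (hR : 0 < R) (hE : BallCondition R E)
    (hne : (frontier E).Nonempty) (hk : 2 / R ≤ k) (x : En n) :
    ‖gradient (barrier k (sgnDist E)) x‖ ≤ k := by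
  have hkR := one_lt_mul_of_two_div_le hR hk
  refine norm_gradient_barrier_le hkR (lipschitzWith_sgnDist E).continuous
    (fun x hx => differentiableAt_sgnDist hR hE hne hx)
    (fun y hy => (norm_gradient_sgnDist hR hE hne ?_).le) x
  rw [div_le_iff₀ hR] at hk
  rw [lt_div_iff₀ (coe_pos_of_one_lt_mul hkR)] at hy
  nlinarith [abs_nonneg (sgnDist E y)]

theorem gradient_barrier_sgnDist_of_tangentBalls (hR : 0 < R) (hE : BallCondition R E)
    (hne : (frontier E).Nonempty) (hk : 2 / R ≤ k) {r : ℝ} (hr : 0 < r) {p ν : En n}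
    (hp : p ∈ frontier E) (h : TangentBalls r E p ν) :
    gradient (barrier k (sgnDist E)) p = (k : ℝ) • ν := by
  have hp0 := sgnDist_of_mem_frontier hp
  have hν := h.hasGradientAt_sgnDist hr (by rw [hp0, zero_smul, add_zero])
    (by rwa [hp0, abs_zero]) (nonempty_frontier_iff.1 hne).1
    (nonempty_compl.2 (nonempty_frontier_iff.1 hne).2)
  rw [(hasGradientAt_barrier_sgnDist hR hE hne hk p).gradient, hp0, mul_zero, hat_zero, mul_one,
    hν.gradient]

/-- The constant `c = 8 (n + 1)` of the theorem, with `β = k ^ 2`. -/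
theorem barrier_sgnDist_estimates (hR : 0 < R) (hE : BallCondition R E)
    (hne : (frontier E).Nonempty) (hk : 2 / R ≤ k) :
    ContDiff ℝ 1 (barrier k (sgnDist E)) ∧
    LipschitzWith (Real.toNNReal (8 * (n + 1) * k ^ 2)) (gradient (barrier k (sgnDist E))) ∧
    (∀ x, lapl (barrier k (sgnDist E)) x ≤ 8 * (n + 1) * k ^ 2 * barrier k (sgnDist E) x) ∧
    ∀ x, ‖gradient (barrier k (sgnDist E)) x‖ ≤ 8 * (n + 1) * k := by
  have hlip := lipschitzWith_gradient_barrier_sgnDist hR hE hne hk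
  have hdiff : Differentiable ℝ (barrier k (sgnDist E)) := fun x =>
    (hasGradientAt_barrier_sgnDist hR hE hne hk x).differentiableAt
  refine ⟨contDiff_one_of_lipschitzWith_gradient hdiff hlip, hlip.weaken ?_, fun x => ?_,
    fun x => (norm_gradient_barrier_sgnDist_le hR hE hne hk x).trans ?_⟩
  · rw [← NNReal.coe_le_coe, Real.coe_toNNReal _ (by positivity)]
    push_cast
    nlinarith [sq_nonneg (k : ℝ), (n.cast_nonneg : (0 : ℝ) ≤ n)]
  · have h := lapl_le_of_lipschitzWith_gradient hlip x
    have := mul_le_mul_of_nonneg_left (half_le_barrier k (sgnDist E) x)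
      (by positivity : (0 : ℝ) ≤ 8 * (n + 1) * k ^ 2)
    push_cast at h
    nlinarith [sq_nonneg (k : ℝ)]
  · nlinarith [k.coe_nonneg, (n.cast_nonneg : (0 : ℝ) ≤ n)]

theorem inner_gradient_barrier_sgnDist_of_isOuterNormal (hR : 0 < R) (hE : BallCondition R E)
    (hne : (frontier E).Nonempty) (hk : 2 / R ≤ k) {x ν : En n} (hx : x ∈ frontier E)
    (hν : IsOuterNormal E x ν) :
    ⟪gradient (barrier k (sgnDist E)) x, ν⟫ = k ∧
      ⟪gradient (barrier k (sgnDist Eᶜ)) x, ν⟫ = -k := by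
  obtain ⟨hν1, r, hr, hin, hout⟩ := hν
  have h : TangentBalls r E x ν := ⟨hν1, hin, hout⟩
  rw [gradient_barrier_sgnDist_of_tangentBalls hR hE hne hk hr hx h,
    gradient_barrier_sgnDist_of_tangentBalls hR hE.compl ((frontier_compl E).symm ▸ hne) hk hr
      ((frontier_compl E).symm ▸ hx) h.compl]
  simp [inner_smul_left, hν1]

theorem barrier_sgnDist_compl_eq_half (hR : 0 < R) (hk : 2 / R ≤ k) {x : En n} (hx : x ∉ E)
    (hxR : R / 2 ≤ infDist x E) : barrier k (sgnDist Eᶜ) x = 1 / 2 := by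
  refine barrier_eq_half ?_
  rw [sgnDist_of_mem (show x ∈ Eᶜ from hx), compl_compl]
  rw [div_le_iff₀ hR] at hk
  nlinarith [k.coe_nonneg]

end BarrierSgnDist

theorem const_estimates {a c β : ℝ} (ha : 0 ≤ a) (hc : 0 ≤ c) (hβ : 0 ≤ β) :
    ContDiff ℝ 1 (fun _ : En n => a) ∧
    LipschitzWith (Real.toNNReal (c * β)) (gradient fun _ : En n => a) ∧
    (∀ x, lapl (fun _ : En n => a) x ≤ c * β * a) ∧
    ∀ x, ‖gradient (fun _ : En n => a) x‖ ≤ c * √β := by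
  have hl : LipschitzWith 0 (gradient fun _ : En n => a) := by
    rw [gradient_fun_const']; exact LipschitzWith.const 0
  refine ⟨contDiff_const, hl.weaken (by positivity), fun x => ?_, fun x => ?_⟩
  · have := lapl_le_of_lipschitzWith_gradient hl x
    push_cast at this
    nlinarith [mul_nonneg (mul_nonneg hc hβ) ha]
  · rw [gradient_fun_const, norm_zero]; positivity

theorem two_div_le_sqrt {R β : ℝ} (hR : 0 < R) (hβ : 4 / R ^ 2 ≤ β) : 2 / R ≤ √β := by
  rw [show 2 / R = √(4 / R ^ 2) by
    rw [Real.sqrt_div' _ (sq_nonneg R), Real.sqrt_sq hR.le]; norm_num]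
  exact Real.sqrt_le_sqrt hβ

end Barrier

open Barrier

/-- Lemma `derivnorm`. For every `R > 0` there are constants
`c, β₀ > 0` depending only on `R` (and the dimension) such that, whenever `Ω ⊆ ℝⁿ` is
a bounded open set of class `C^{1,1}` and `Ω₁ ∈ U_R(Ω)` with `Γ = ∂Ω₁` and
`Ω₂ = Ω \ closure Ω₁`, for every `β ≥ β₀` there exist `W^{2,∞}` functions
`z₁, z₂` satisfying: (i) `1/2 ≤ z_i ≤ 1` on `Ω_i` with `z₂ ≡ 1/2` near `∂Ω`;
(ii) `Δz_i ≤ c β z_i` on `Ω_i`; (iii) `z₁ = z₂ = 1` on `Γ` and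
`∂_ν z₁ = -∂_ν z₂ ≥ √β` on `Γ`; (iv) `‖∇z_i‖_∞ ≤ c √β` and `‖∇²z_i‖_∞ ≤ c β`. -/
theorem statement_5 (n : ℕ) (R : ℝ) (hR : 0 < R) :
    ∃ c > 0, ∃ β₀ > 0, ∀ Ω Ω₁ : Set (En n),
      IsC11Set Ω → Bornology.IsBounded Ω → URin R Ω Ω₁ →
      ∀ β ≥ β₀, ∃ z₁ z₂ : En n → ℝ,
        ContDiff ℝ 1 z₁ ∧ ContDiff ℝ 1 z₂ ∧
        LipschitzWith (Real.toNNReal (c * β)) (fun x => gradient z₁ x) ∧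
        LipschitzWith (Real.toNNReal (c * β)) (fun x => gradient z₂ x) ∧
        (∀ x ∈ Ω₁, z₁ x ∈ Icc (1/2 : ℝ) 1) ∧
        (∀ x ∈ Ω \ closure Ω₁, z₂ x ∈ Icc (1/2 : ℝ) 1) ∧
        (∃ δ > 0, ∀ x ∈ (Ω \ closure Ω₁) ∩ thickening δ (frontier Ω), z₂ x = 1/2) ∧
        (∀ᵐ x ∂(volume.restrict Ω₁), lapl z₁ x ≤ c * β * z₁ x) ∧
        (∀ᵐ x ∂(volume.restrict (Ω \ closure Ω₁)), lapl z₂ x ≤ c * β * z₂ x) ∧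
        (∀ x ∈ frontier Ω₁, z₁ x = 1 ∧ z₂ x = 1 ∧
          ∀ ν : En n, IsOuterNormal Ω₁ x ν →
            ⟪gradient z₁ x, ν⟫ = -⟪gradient z₂ x, ν⟫ ∧
            Real.sqrt β ≤ ⟪gradient z₁ x, ν⟫) ∧
        (∀ x ∈ Ω₁, ‖gradient z₁ x‖ ≤ c * Real.sqrt β) ∧
        (∀ x ∈ Ω \ closure Ω₁, ‖gradient z₂ x‖ ≤ c * Real.sqrt β) := by
  refine ⟨8 * (n + 1), by positivity, 4 / R ^ 2, by positivity, fun Ω Ω₁ _ _ hΩ₁ β hβ => ?_⟩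
  obtain ⟨hUR, -, hsep⟩ := hΩ₁
  have hβ₀ : 0 ≤ β := (by positivity : (0 : ℝ) ≤ 4 / R ^ 2).trans hβ
  rcases (frontier Ω₁).eq_empty_or_nonempty with hfr | hne
  · obtain ⟨hc, hl, hΔ, hg⟩ := const_estimates (n := n) (by norm_num : (0 : ℝ) ≤ 1 / 2)
      (by positivity : (0 : ℝ) ≤ 8 * (n + 1)) hβ₀
    exact ⟨_, _, hc, hc, hl, hl, fun _ _ => by norm_num, fun _ _ => by norm_num,
      ⟨1, one_pos, fun _ _ => rfl⟩, ae_of_all _ hΔ, ae_of_all _ hΔ, by simp [hfr],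
      fun x _ => hg x, fun x _ => hg x⟩
  set k : ℝ≥0 := ⟨√β, Real.sqrt_nonneg β⟩
  have hk : 2 / R ≤ k := two_div_le_sqrt hR hβ
  have hE := hUR.ballCondition hR
  obtain ⟨hc₁, hl₁, hΔ₁, hg₁⟩ := barrier_sgnDist_estimates hR hE hne hk
  obtain ⟨hc₂, hl₂, hΔ₂, hg₂⟩ :=
    barrier_sgnDist_estimates hR hE.compl ((frontier_compl Ω₁).symm ▸ hne) hk
  rw [show (k : ℝ) ^ 2 = β from Real.sq_sqrt hβ₀] at hl₁ hl₂ hΔ₁ hΔ₂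
  refine ⟨_, _, hc₁, hc₂, hl₁, hl₂,
    fun x hx => barrier_mem_Icc k.coe_nonneg (sgnDist_nonpos_of_mem hx),
    fun x hx => barrier_mem_Icc k.coe_nonneg
      (sgnDist_nonpos_of_mem fun h => hx.2 (subset_closure h)),
    ⟨R / 2, half_pos hR, fun x hx => ?_⟩, ae_of_all _ hΔ₁, ae_of_all _ hΔ₂,
    fun x hx => ⟨barrier_eq_one _ (sgnDist_of_mem_frontier hx),
      barrier_eq_one _ (sgnDist_of_mem_frontier ((frontier_compl Ω₁).symm ▸ hx)), fun ν hν => ?_⟩,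
    fun x _ => hg₁ x, fun x _ => hg₂ x⟩
  · obtain ⟨y, hy, hxy⟩ := mem_thickening_iff.1 hx.2
    refine barrier_sgnDist_compl_eq_half hR hk (fun h => hx.1.2 (subset_closure h))
      ((le_infDist (nonempty_frontier_iff.1 hne).1).2 fun z hz => ?_)
    linarith [hsep z hz y hy, dist_triangle z x y, dist_comm x z]
  · obtain ⟨h₁, h₂⟩ := inner_gradient_barrier_sgnDist_of_isOuterNormal hR hE hne hk hx hν
    rw [h₁, h₂, neg_neg]
    exact ⟨rfl, le_rfl⟩
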